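/- arXiv:2512.16787 — 4 statements merged into one kernel-verified Lean document; each statement's English description precedes it below -/
import Mathlib

section
/- With u_α the smallest and u_β the largest root of b, one has max(u_α/s₂, u_α/s₃) = min(u_α/s₁, u_α/s₂, (1−2u_α)/s₃) = u_α/s₂, i.e. α₋(S,U_α) = α₊(S,U_α) = u_α/s₂, and max((1−2u_β)/s₁, u_β/s₂, u_β/s₃) = min(u_β/s₁, u_β/s₂) = u_β/s₂, i.e. β₋(S,U_β) = β₊(S,U_β) = u_β/s₂, where the ordered eigenvalues of U_α are (u_α, u_α, 1−2u_α) and of U_β are (1−2u_β, u_β, u_β). (Proposition 3.2(ii).) -/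
open Matrix Set

noncomputable section

/-- `R` is a real 3×3 rotation matrix (element of SO(3)). -/
def IsSO3 (R : Matrix (Fin 3) (Fin 3) ℝ) : Prop := Rᵀ * R = 1 ∧ R.det = 1

/-- The rank-one matrix `n ⊗ n = (nᵢ nⱼ)`. -/
def outer (n : Fin 3 → ℝ) : Matrix (Fin 3) (Fin 3) ℝ := Matrix.vecMulVec n n

/-- `n` is a unit vector of `ℝ³`. -/
def unitVec (n : Fin 3 → ℝ) : Prop := n 0 ^ 2 + n 1 ^ 2 + n 2 ^ 2 = 1

/-- `α₋(F,G) = max(g₁/f₂, g₂/f₃)`. -/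
def alphaMinus (f1 f2 f3 g1 g2 g3 : ℝ) : ℝ := max (g1 / f2) (g2 / f3)

/-- `α₊(F,G) = min(g₁/f₁, g₂/f₂, g₃/f₃)`. -/
def alphaPlus (f1 f2 f3 g1 g2 g3 : ℝ) : ℝ := min (g1 / f1) (min (g2 / f2) (g3 / f3))

/-- `β₋(F,G) = max(g₁/f₁, g₂/f₂, g₃/f₃)`. -/
def betaMinus (f1 f2 f3 g1 g2 g3 : ℝ) : ℝ := max (g1 / f1) (max (g2 / f2) (g3 / f3))

/-- `β₊(F,G) = min(g₂/f₁, g₃/f₂)`. -/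
def betaPlus (f1 f2 f3 g1 g2 g3 : ℝ) : ℝ := min (g2 / f1) (g3 / f2)

/-- `A(F,G) = ([α₋,α₊] ∪ [β₋,β₊]) \ {1}` in terms of the ordered eigenvalues. -/
def setA (f1 f2 f3 g1 g2 g3 : ℝ) : Set ℝ :=
  (Set.Icc (alphaMinus f1 f2 f3 g1 g2 g3) (alphaPlus f1 f2 f3 g1 g2 g3) ∪
    Set.Icc (betaMinus f1 f2 f3 g1 g2 g3) (betaPlus f1 f2 f3 g1 g2 g3)) \ {1}

/-- Second elementary symmetric invariant `i₂(M) = ((tr M)² − tr(M²))/2`. -/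
def i2 (M : Matrix (Fin 3) (Fin 3) ℝ) : ℝ := (Matrix.trace M ^ 2 - Matrix.trace (M * M)) / 2

/-- Third elementary symmetric invariant `i₃(M) = det M`. -/
def i3 (M : Matrix (Fin 3) (Fin 3) ℝ) : ℝ := M.det

/-- `η(λ,t) = λ/(λ + t(1−λ))`. -/
def etaFun (lam t : ℝ) : ℝ := lam / (lam + t * (1 - lam))

/-- The one-parameter family `M(t) = η(λ,t) F + (1 − η(λ,t)) n⊗n`. -/
def Mcurve (F : Matrix (Fin 3) (Fin 3) ℝ) (n : Fin 3 → ℝ) (lam t : ℝ) :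
    Matrix (Fin 3) (Fin 3) ℝ :=
  etaFun lam t • F + (1 - etaFun lam t) • outer n

/-- The quadratic `b(x) = 6 s₂ x² + (s₁s₃ − 3s₂ − 4s₂²) x + 2 s₂²`. -/
def bpoly (s1 s2 s3 x : ℝ) : ℝ :=
  6 * s2 * x ^ 2 + (s1 * s3 - 3 * s2 - 4 * s2 ^ 2) * x + 2 * s2 ^ 2

/-!
Since `b` has positive leading coefficient and roots `u_α < u_β`, it is negative exactly between
them. Using `s₁ + s₂ + s₃ = 1` one finds `b(s₂/(s₃+2s₂)) < 0` and, by the symmetry `s₁ ↔ s₃` of `b`,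
`b(s₂/(s₁+2s₂)) < 0`. Hence `u_α (s₃ + 2s₂) < s₂ < u_β (s₁ + 2s₂)`, which are precisely the
inequalities `u_α/s₂ < (1−2u_α)/s₃` and `(1−2u_β)/s₁ < u_β/s₂` that decide the `max` and `min`
in `α₊` and `β₋`; the other comparisons only use `s₁ < s₂ < s₃`.
-/

theorem mem_Ioo_of_quadratic_neg {a b c u v x : ℝ} (ha : 0 < a) (huv : u < v)
    (hu : a * u ^ 2 + b * u + c = 0) (hv : a * v ^ 2 + b * v + c = 0)
    (hx : a * x ^ 2 + b * x + c < 0) : x ∈ Ioo u v := by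
  have hb : b = -a * (u + v) := by
    have h : (u - v) * (a * (u + v) + b) = 0 := by linear_combination hu - hv
    linarith [(mul_eq_zero.1 h).resolve_left (sub_ne_zero.2 huv.ne)]
  have hc : c = a * u * v := by linear_combination hu - u * hb
  have hfac : (x - u) * (x - v) < 0 := by
    refine neg_of_mul_neg_right (a := a) ?_ ha.le
    rw [hb, hc] at hx
    linarith
  constructor <;> nlinarith

theorem bpoly_symm (s1 s2 s3 x : ℝ) : bpoly s1 s2 s3 x = bpoly s3 s2 s1 x := by
  unfold bpoly
  ring

theorem bpoly_div_eq {s1 s2 s3 : ℝ} (hs2 : 0 < s2) (hs3 : 0 < s3) (hsum : s1 + s2 + s3 = 1) :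
    bpoly s1 s2 s3 (s2 / (s3 + 2 * s2)) =
      s2 * s3 * ((s1 - s2) * (s3 - s2)) / (s3 + 2 * s2) ^ 2 := by
  rw [bpoly, eq_div_iff (by positivity)]
  field_simp
  linear_combination (3 * s2 * s3) * hsum

theorem bpoly_div_neg {s1 s2 s3 : ℝ} (hs2 : 0 < s2) (hs3 : 0 < s3) (hsum : s1 + s2 + s3 = 1)
    (hsign : (s1 - s2) * (s3 - s2) < 0) : bpoly s1 s2 s3 (s2 / (s3 + 2 * s2)) < 0 := by
  rw [bpoly_div_eq hs2 hs3 hsum]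
  exact div_neg_of_neg_of_pos (mul_neg_of_pos_of_neg (by positivity) hsign) (by positivity)

section SpectralBounds

variable {f1 f2 f3 u : ℝ}

theorem alphaMinus_eq_div (g3 : ℝ) (hu : 0 ≤ u) (hf2 : 0 < f2) (hf23 : f2 ≤ f3) :
    alphaMinus f1 f2 f3 u u g3 = u / f2 :=
  max_eq_left (div_le_div_of_nonneg_left hu hf2 hf23)

theorem alphaPlus_eq_div (hu : 0 ≤ u) (hf1 : 0 < f1) (hf12 : f1 ≤ f2) (hf3 : 0 < f3)
    (h : u * (f3 + 2 * f2) ≤ f2) : alphaPlus f1 f2 f3 u u (1 - 2 * u) = u / f2 := by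
  have h23 : u / f2 ≤ (1 - 2 * u) / f3 := by
    rw [div_le_div_iff₀ (hf1.trans_le hf12) hf3]
    linarith
  rw [alphaPlus, min_eq_left h23, min_eq_right (div_le_div_of_nonneg_left hu hf1 hf12)]

theorem betaMinus_eq_div (hu : 0 ≤ u) (hf1 : 0 < f1) (hf2 : 0 < f2) (hf23 : f2 ≤ f3)
    (h : f2 ≤ u * (f1 + 2 * f2)) : betaMinus f1 f2 f3 (1 - 2 * u) u u = u / f2 := by
  rw [betaMinus, max_eq_left (div_le_div_of_nonneg_left hu hf2 hf23), max_eq_right]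
  rw [div_le_div_iff₀ hf1 hf2]
  linarith

theorem betaPlus_eq_div (hu : 0 ≤ u) (hf1 : 0 < f1) (hf12 : f1 ≤ f2) :
    betaPlus f1 f2 f3 (1 - 2 * u) u u = u / f2 :=
  min_eq_right (div_le_div_of_nonneg_left hu hf1 hf12)

end SpectralBounds

theorem statement4_general (s1 s2 s3 ua ub : ℝ)
    (hs1 : 0 < s1) (hs12 : s1 < s2) (hs23 : s2 < s3) (hsum : s1 + s2 + s3 = 1)
    (hua : bpoly s1 s2 s3 ua = 0) (hub : bpoly s1 s2 s3 ub = 0)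
    (hua1 : s1 ≤ ua) (hua2 : ua < 1 / 3) (hub1 : 1 / 3 < ub) :
    alphaMinus s1 s2 s3 ua ua (1 - 2 * ua) = ua / s2 ∧
    alphaPlus s1 s2 s3 ua ua (1 - 2 * ua) = ua / s2 ∧
    betaMinus s1 s2 s3 (1 - 2 * ub) ub ub = ub / s2 ∧
    betaPlus s1 s2 s3 (1 - 2 * ub) ub ub = ub / s2 := by
  have hs2 : 0 < s2 := hs1.trans hs12
  have hs3 : 0 < s3 := hs2.trans hs23
  have hua0 : 0 ≤ ua := hs1.le.trans hua1
  have hub0 : 0 ≤ ub := by linarith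
  have hroots : ua < ub := hua2.trans hub1
  have hsign : (s1 - s2) * (s3 - s2) < 0 := mul_neg_of_neg_of_pos (by linarith) (by linarith)
  have hα : ua * (s3 + 2 * s2) < s2 := by
    have h := mem_Ioo_of_quadratic_neg (by positivity) hroots hua hub
      (bpoly_div_neg hs2 hs3 hsum hsign)
    exact (lt_div_iff₀ (by positivity)).1 h.1
  have hβ : s2 < ub * (s1 + 2 * s2) := by
    rw [bpoly_symm] at hua hub
    have h := mem_Ioo_of_quadratic_neg (by positivity) hroots hua hub
      (bpoly_div_neg hs2 hs1 (by linarith) (by linarith [mul_comm (s1 - s2) (s3 - s2)]))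
    exact (div_lt_iff₀ (by positivity)).1 h.2
  exact ⟨alphaMinus_eq_div _ hua0 hs2 hs23.le, alphaPlus_eq_div hua0 hs1 hs12.le hs3 hα.le,
    betaMinus_eq_div hub0 hs1 hs2 hs23.le hβ.le, betaPlus_eq_div hub0 hs1 hs12.le⟩

theorem statement4 (s1 s2 s3 ua ub : ℝ)
    (hs1 : 0 < s1) (hs12 : s1 < s2) (hs23 : s2 < s3) (hsum : s1 + s2 + s3 = 1)
    (hua : bpoly s1 s2 s3 ua = 0) (hub : bpoly s1 s2 s3 ub = 0)
    (huamin : ∀ x : ℝ, bpoly s1 s2 s3 x = 0 → ua ≤ x)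
    (hubmax : ∀ x : ℝ, bpoly s1 s2 s3 x = 0 → x ≤ ub)
    (hua1 : s1 ≤ ua) (hua2 : ua < 1 / 3) (hub1 : 1 / 3 < ub) (hub2 : ub ≤ s3) :
    alphaMinus s1 s2 s3 ua ua (1 - 2 * ua) = ua / s2 ∧
    alphaPlus s1 s2 s3 ua ua (1 - 2 * ua) = ua / s2 ∧
    betaMinus s1 s2 s3 (1 - 2 * ub) ub ub = ub / s2 ∧
    betaPlus s1 s2 s3 (1 - 2 * ub) ub ub = ub / s2 :=
  statement4_general s1 s2 s3 ua ub hs1 hs12 hs23 hsum hua hub hua1 hua2 hub1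
end
end

section
/- For every t ∈ [0,1], with E₂(t) := s₂ η(α,t), one has i₂(M_α(t)) = ((2 − 3u_α)/u_α) (2u_α − E₂(t)) E₂(t) and i₃(M_α(t)) = ((1 − 2u_α)/u_α) (3u_α − 2E₂(t)) E₂(t)². (Lemma 6.1, formula (mainxy).) -/
/-!
The invariants of `η • S + (1 - η) • n ⊗ n` are polynomials in `η` in which `n` (with `n₂ = 0`
and `|n| = 1`) enters only through `K = s₁ n₃² + s₃ n₁²`. Taking determinants in
`Rᵀ U_α R = α S + (1 - α) n ⊗ n` and using `b(u_α) = 0` pins down `K = 3 s₂ (1 - 2 u_α)`;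
substituting this and `b(u_α) = 0` once more gives the factorised forms. The roots `0` and `s₂`
of `b` are excluded since `b(0) = 2 s₂²` and `b(s₂) = s₂ (s₂ - s₁) (s₂ - s₃)`.
-/

open Matrix Set

noncomputable section

theorem i2_smul_diagonal_add_smul_outer (e f a b c : ℝ) (n : Fin 3 → ℝ) :
    i2 (e • diagonal ![a, b, c] + f • outer n) =
      e ^ 2 * (a * b + a * c + b * c) +
        e * f * (n 0 ^ 2 * (b + c) + n 1 ^ 2 * (a + c) + n 2 ^ 2 * (a + b)) := by
  simp only [i2, outer, trace_fin_three, mul_apply, Fin.sum_univ_three, Matrix.add_apply,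
    Matrix.smul_apply, smul_eq_mul, vecMulVec_apply, diagonal_apply, Fin.reduceEq, ↓reduceIte,
    cons_val_zero, cons_val_one, cons_val_two, head_cons, tail_cons]
  ring

theorem i3_smul_diagonal_add_smul_outer (e f a b c : ℝ) (n : Fin 3 → ℝ) :
    i3 (e • diagonal ![a, b, c] + f • outer n) =
      e ^ 3 * (a * b * c) +
        e ^ 2 * f * (n 0 ^ 2 * (b * c) + n 1 ^ 2 * (a * c) + n 2 ^ 2 * (a * b)) := by
  simp only [i3, outer, det_fin_three, Matrix.add_apply, Matrix.smul_apply, smul_eq_mul,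
    vecMulVec_apply, diagonal_apply, Fin.reduceEq, ↓reduceIte, cons_val_zero, cons_val_one,
    cons_val_two, head_cons, tail_cons]
  ring

theorem det_transpose_mul_mul_of_orthogonal {m K : Type*} [Fintype m] [DecidableEq m]
    [CommRing K] {R : Matrix m m K} (hR : Rᵀ * R = 1) (A : Matrix m m K) :
    (Rᵀ * A * R).det = A.det := by
  have hR' := congrArg det hR
  rw [det_mul, det_transpose, det_one] at hR'
  rw [det_mul, det_mul, det_transpose]
  linear_combination A.det * hR'

theorem bpoly_zero (s1 s2 s3 : ℝ) : bpoly s1 s2 s3 0 = 2 * s2 ^ 2 := by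
  simp [bpoly]

theorem bpoly_self_of_sum_eq_one {s1 s2 s3 : ℝ} (hsum : s1 + s2 + s3 = 1) :
    bpoly s1 s2 s3 s2 = s2 * (s2 - s1) * (s2 - s3) := by
  rw [bpoly]; linear_combination s2 ^ 2 * hsum

theorem outer_weight_eq_of_det_eq {s1 s2 s3 ua : ℝ} {n : Fin 3 → ℝ} (hs2 : s2 ≠ 0)
    (hua : ua ≠ 0) (hua_s2 : ua ≠ s2) (hb : bpoly s1 s2 s3 ua = 0) (hn1 : n 1 = 0)
    (hdet : (diagonal ![ua, ua, 1 - 2 * ua]).det =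
      i3 ((ua / s2) • diagonal ![s1, s2, s3] + (1 - ua / s2) • outer n)) :
    s1 * n 2 ^ 2 + s3 * n 0 ^ 2 = 3 * s2 * (1 - 2 * ua) := by
  rw [det_diagonal, Fin.prod_univ_three, i3_smul_diagonal_add_smul_outer, hn1] at hdet
  simp only [cons_val_zero, cons_val_one, cons_val_two, head_cons, tail_cons] at hdet
  field_simp at hdet
  refine mul_left_cancel₀ (mul_ne_zero hs2 (sub_ne_zero.2 hua_s2.symm)) ?_
  rw [bpoly] at hb
  linear_combination -hdet - s2 * hb

theorem statement9_general (s1 s2 s3 ua : ℝ)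
    (hs1 : 0 < s1) (hs12 : s1 < s2) (hs23 : s2 < s3) (hsum : s1 + s2 + s3 = 1)
    (hua : bpoly s1 s2 s3 ua = 0)
    (S : Matrix (Fin 3) (Fin 3) ℝ) (hS : S = Matrix.diagonal ![s1, s2, s3])
    (n : Fin 3 → ℝ) (hn : unitVec n) (hn1 : n 1 = 0)
    (R : Matrix (Fin 3) (Fin 3) ℝ) (hR : IsSO3 R)
    (heq : Rᵀ * Matrix.diagonal ![ua, ua, 1 - 2 * ua] * R =
      (ua / s2) • S + (1 - ua / s2) • outer n) :
    ∀ t ∈ Set.Icc (0 : ℝ) 1,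
      i2 (Mcurve S n (ua / s2) t) =
        ((2 - 3 * ua) / ua) * (2 * ua - s2 * etaFun (ua / s2) t) *
          (s2 * etaFun (ua / s2) t) ∧
      i3 (Mcurve S n (ua / s2) t) =
        ((1 - 2 * ua) / ua) * (3 * ua - 2 * (s2 * etaFun (ua / s2) t)) *
          (s2 * etaFun (ua / s2) t) ^ 2 := by
  intro t _
  have hs2 : 0 < s2 := hs1.trans hs12
  have hua0 : ua ≠ 0 := by
    rintro rfl
    rw [bpoly_zero] at hua
    exact (by positivity : (0 : ℝ) < 2 * s2 ^ 2).ne' hua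
  have hua_s2 : ua ≠ s2 := by
    rintro rfl
    rw [bpoly_self_of_sum_eq_one hsum] at hua
    exact (mul_pos (mul_pos hs2 (sub_pos.2 hs12)) (sub_pos.2 hs23)).ne' (by linear_combination -hua)
  have hK := outer_weight_eq_of_det_eq hs2.ne' hua0 hua_s2 hua hn1
    (by rw [← det_transpose_mul_mul_of_orthogonal hR.1, heq, hS]; rfl)
  have hb : ua * (s1 * s3) = s2 * (3 * ua + 4 * s2 * ua - 6 * ua ^ 2 - 2 * s2) := by
    rw [bpoly] at hua; linear_combination hua
  rw [unitVec, hn1] at hn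
  rw [Mcurve, hS, i2_smul_diagonal_add_smul_outer, i3_smul_diagonal_add_smul_outer, hn1]
  set η := etaFun (ua / s2) t
  simp only [div_mul_eq_mul_div, eq_div_iff hua0]
  constructor
  · linear_combination ua * η * (1 - η) * s2 * hn + ua * η * (1 - η) * hK + η ^ 2 * hb +
      ua * s2 * η ^ 2 * hsum
  · linear_combination ua * η ^ 2 * (1 - η) * s2 * hK + η ^ 3 * s2 * hb

theorem statement9 (s1 s2 s3 ua : ℝ)
    (hs1 : 0 < s1) (hs12 : s1 < s2) (hs23 : s2 < s3) (hsum : s1 + s2 + s3 = 1)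
    (hua : bpoly s1 s2 s3 ua = 0) (huamin : ∀ x : ℝ, bpoly s1 s2 s3 x = 0 → ua ≤ x)
    (hua1 : s1 ≤ ua) (hua2 : ua < 1 / 3)
    (S : Matrix (Fin 3) (Fin 3) ℝ) (hS : S = Matrix.diagonal ![s1, s2, s3])
    (n : Fin 3 → ℝ) (hn : unitVec n) (hn1 : n 1 = 0)
    (R : Matrix (Fin 3) (Fin 3) ℝ) (hR : IsSO3 R)
    (heq : Rᵀ * Matrix.diagonal ![ua, ua, 1 - 2 * ua] * R =
      (ua / s2) • S + (1 - ua / s2) • outer n) :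
    ∀ t ∈ Set.Icc (0 : ℝ) 1,
      i2 (Mcurve S n (ua / s2) t) =
        ((2 - 3 * ua) / ua) * (2 * ua - s2 * etaFun (ua / s2) t) *
          (s2 * etaFun (ua / s2) t) ∧
      i3 (Mcurve S n (ua / s2) t) =
        ((1 - 2 * ua) / ua) * (3 * ua - 2 * (s2 * etaFun (ua / s2) t)) *
          (s2 * etaFun (ua / s2) t) ^ 2 :=
  statement9_general s1 s2 s3 ua hs1 hs12 hs23 hsum hua S hS n hn hn1 R hR heq
end
end

section
/- For every q ∈ [0,1], the smallest and middle ordered eigenvalues of M_α(q) satisfy E₁(q) + 2 E₂(q) − 3 u_α ≥ 0. (Inequality (ccomb) in the proof of Proposition 7.1.) -/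
open Matrix Set

noncomputable section

/-!
Write `η = η(α, q)` and `c = 3u_α − 2E₂ = 3u_α − 2s₂η`. The traces of `M_α(q)` and of its square
(`tr M_α = 1`) determine `E₁ + E₃` and `E₁² + E₃²` in terms of `η` and `σ = nᵀSn`, hence the
quadratic `2(E₁ − c)(E₃ − c)`. At `η = α` the matrix is conjugate to `U_α`, which fixes `σ`;
eliminating `σ` with this and `b(u_α) = 0` leaves
`2(1 − α)(E₁ − c)(E₃ − c) = (s₂ − s₁)(s₃ − s₂)(η − α)(3α − 2η)`.
Since `α ≤ η ≤ 1` and `b(u_α) = 0` forces `3α > 2`, the product is nonnegative, and as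
`E₁ + E₃ ≥ 2c` this gives `E₁ ≥ c`.
-/

namespace Matrix

variable {m R : Type*} [Fintype m] [DecidableEq m] [CommRing R] {Q A B : Matrix m m R}

theorem trace_eq_of_transpose_mul_mul_eq (hQ : Qᵀ * Q = 1) (h : Qᵀ * A * Q = B) :
    trace A = trace B := by
  rw [← h, trace_mul_cycle, mul_eq_one_comm.mp hQ, one_mul]

theorem trace_mul_self_eq_of_transpose_mul_mul_eq (hQ : Qᵀ * Q = 1) (h : Qᵀ * A * Q = B) :
    trace (A * A) = trace (B * B) := by
  refine trace_eq_of_transpose_mul_mul_eq hQ ?_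
  rw [← h]
  simp only [Matrix.mul_assoc]
  rw [← Matrix.mul_assoc Q, mul_eq_one_comm.mp hQ, Matrix.one_mul]

end Matrix

lemma trace_diagonal_three (a b c : ℝ) : trace (diagonal ![a, b, c]) = a + b + c := by
  simp [trace_diagonal, Fin.sum_univ_three]

lemma trace_diagonal_three_mul_self (a b c : ℝ) :
    trace (diagonal ![a, b, c] * diagonal ![a, b, c]) = a ^ 2 + b ^ 2 + c ^ 2 := by
  simp [trace_diagonal, Fin.sum_univ_three, sq]

section Family

variable (s1 s2 s3 x : ℝ) {n : Fin 3 → ℝ}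

lemma trace_smul_diagonal_add_smul_outer (hn : unitVec n) :
    trace (x • diagonal ![s1, s2, s3] + (1 - x) • outer n) = x * (s1 + s2 + s3) + (1 - x) := by
  simp only [trace_add, trace_smul, trace_diagonal_three, outer, trace_vecMulVec, dotProduct,
    Fin.sum_univ_three, smul_eq_mul]
  unfold unitVec at hn
  linear_combination (1 - x) * hn

lemma trace_mul_self_smul_diagonal_add_smul_outer (hn : unitVec n) :
    trace ((x • diagonal ![s1, s2, s3] + (1 - x) • outer n) *
        (x • diagonal ![s1, s2, s3] + (1 - x) • outer n)) =
      x ^ 2 * (s1 ^ 2 + s2 ^ 2 + s3 ^ 2)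
        + 2 * x * (1 - x) * (s1 * n 0 ^ 2 + s2 * n 1 ^ 2 + s3 * n 2 ^ 2) + (1 - x) ^ 2 := by
  unfold unitVec at hn
  simp only [outer, trace_fin_three, mul_apply, Matrix.add_apply, Matrix.smul_apply,
    diagonal_apply, smul_eq_mul, mul_ite, mul_zero, vecMulVec_apply, Fin.sum_univ_three,
    cons_val_zero, cons_val_one, cons_val, Fin.reduceEq, ↓reduceIte, zero_add]
  linear_combination (1 - x) ^ 2 * (n 0 ^ 2 + n 1 ^ 2 + n 2 ^ 2 + 1) * hn

end Family

lemma etaFun_mem_Icc {lam t : ℝ} (hlam0 : 0 < lam) (hlam1 : lam ≤ 1) (ht : t ∈ Icc 0 1) :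
    etaFun lam t ∈ Icc lam 1 := by
  obtain ⟨ht0, ht1⟩ := ht
  have hd0 : lam ≤ lam + t * (1 - lam) := by nlinarith
  have hd1 : lam + t * (1 - lam) ≤ 1 := by nlinarith
  have hd : 0 < lam + t * (1 - lam) := hlam0.trans_le hd0
  refine ⟨?_, ?_⟩
  · rw [etaFun, le_div_iff₀ hd]; nlinarith
  · rw [etaFun, div_le_one hd]; exact hd0

section Bpoly

variable {s1 s2 s3 ua : ℝ}

lemma bpoly_s2 (hsum : s1 + s2 + s3 = 1) :
    bpoly s1 s2 s3 s2 = s2 * ((s2 - s1) * (s2 - s3)) := by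
  unfold bpoly; linear_combination s2 ^ 2 * hsum

lemma lt_of_forall_root_le_of_bpoly_neg {x : ℝ} (hx : 0 ≤ x) (hbx : bpoly s1 s2 s3 x < 0)
    (hmin : ∀ y, bpoly s1 s2 s3 y = 0 → ua ≤ y) : ua < x := by
  have hcont : ContinuousOn (bpoly s1 s2 s3) (Icc 0 x) := by unfold bpoly; fun_prop
  have hb0 : 0 ≤ bpoly s1 s2 s3 0 := by simp [bpoly]; positivity
  obtain ⟨y, hy, hby⟩ := intermediate_value_Icc' hx hcont ⟨hbx.le, hb0⟩
  exact (hmin y hby).trans_lt (hy.2.lt_of_ne (by rintro rfl; exact hbx.ne hby))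

lemma two_mul_lt_three_mul_of_bpoly_eq_zero (hs1 : 0 < s1) (hs2 : 0 < s2) (hs3 : 0 < s3)
    (hua : 0 < ua) (hua2 : ua < 1 / 2) (hb : bpoly s1 s2 s3 ua = 0) : 2 * s2 < 3 * ua := by
  have h : s2 * (1 - 2 * ua) * (3 * ua - 2 * s2) = s1 * s3 * ua := by
    unfold bpoly at hb; linear_combination -hb
  have hpos : 0 < s2 * (1 - 2 * ua) * (3 * ua - 2 * s2) := h ▸ by positivity
  linarith [pos_of_mul_pos_right hpos (mul_nonneg hs2.le (by linarith))]

end Bpoly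

lemma nonneg_of_mul_nonneg_of_add_nonneg {x y : ℝ} (hxy : 0 ≤ x * y) (h : 0 ≤ x + y) :
    0 ≤ x := by
  by_contra! hx
  nlinarith

lemma two_mul_sub_mul_sub_eq_of_traces {s1 s2 s3 ua a σ e E1 E3 : ℝ} (hs2 : s2 ≠ 0)
    (ha : a ≠ 0) (hua : ua = s2 * a) (hsum : s1 + s2 + s3 = 1) (hb : bpoly s1 s2 s3 ua = 0)
    (hτa : 2 * ua ^ 2 + (1 - 2 * ua) ^ 2 =
      a ^ 2 * (s1 ^ 2 + s2 ^ 2 + s3 ^ 2) + 2 * a * (1 - a) * σ + (1 - a) ^ 2)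
    (hE : E1 + E3 = 1 - s2 * e)
    (hE2 : E1 ^ 2 + E3 ^ 2 + (s2 * e) ^ 2 =
      e ^ 2 * (s1 ^ 2 + s2 ^ 2 + s3 ^ 2) + 2 * e * (1 - e) * σ + (1 - e) ^ 2) :
    2 * (1 - a) * ((E1 - (3 * ua - 2 * s2 * e)) * (E3 - (3 * ua - 2 * s2 * e))) =
      (s2 - s1) * (s3 - s2) * (e - a) * (3 * a - 2 * e) := by
  subst hua
  obtain rfl : s3 = 1 - s1 - s2 := by linear_combination hsum
  -- after scaling by `s₂ α`, both `σ` (via `hτa`) and `s₁ s₃` (via `hb`) cancel polynomially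
  refine mul_left_cancel₀ (mul_ne_zero hs2 ha) ?_
  unfold bpoly at hb
  linear_combination
    s2 * a * (1 - a) * (E1 + E3 + 1 - s2 * e - 2 * (3 * (s2 * a) - 2 * s2 * e)) * hE
      - s2 * a * (1 - a) * hE2 + s2 * e * (1 - e) * hτa + 3 * a * (e - a) * hb

theorem statement13_general (s1 s2 s3 ua : ℝ)
    (hs1 : 0 < s1) (hs12 : s1 < s2) (hs23 : s2 < s3) (hsum : s1 + s2 + s3 = 1)
    (hua : bpoly s1 s2 s3 ua = 0) (huamin : ∀ x : ℝ, bpoly s1 s2 s3 x = 0 → ua ≤ x)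
    (hua1 : s1 ≤ ua) (hua2 : ua < 1 / 3)
    (S : Matrix (Fin 3) (Fin 3) ℝ) (hS : S = Matrix.diagonal ![s1, s2, s3])
    (n : Fin 3 → ℝ) (hn : unitVec n)
    (R : Matrix (Fin 3) (Fin 3) ℝ) (hR : IsSO3 R)
    (heq : Rᵀ * Matrix.diagonal ![ua, ua, 1 - 2 * ua] * R =
      (ua / s2) • S + (1 - ua / s2) • outer n)
    (E1 E2 E3 : ℝ → ℝ)
    (heig : ∀ t ∈ Set.Icc (0 : ℝ) 1, ∃ Q : Matrix (Fin 3) (Fin 3) ℝ, IsSO3 Q ∧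
      Qᵀ * Mcurve S n (ua / s2) t * Q = Matrix.diagonal ![E1 t, E2 t, E3 t])
    (hE2 : ∀ t ∈ Set.Icc (0 : ℝ) 1, E2 t = s2 * etaFun (ua / s2) t) :
    ∀ q ∈ Set.Icc (0 : ℝ) 1, E1 q + 2 * E2 q - 3 * ua ≥ 0 := by
  intro q hq
  subst hS
  have hs2 : 0 < s2 := hs1.trans hs12
  have hua0 : 0 < ua := hs1.trans_le hua1
  have hbs2 : bpoly s1 s2 s3 s2 < 0 := by
    rw [bpoly_s2 hsum]
    exact mul_neg_of_pos_of_neg hs2 (mul_neg_of_pos_of_neg (sub_pos.2 hs12) (sub_neg.2 hs23))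
  have hus2 : ua < s2 := lt_of_forall_root_le_of_bpoly_neg hs2.le hbs2 huamin
  have h23 : 2 * s2 < 3 * ua :=
    two_mul_lt_three_mul_of_bpoly_eq_zero hs1 hs2 (hs2.trans hs23) hua0 (by linarith) hua
  set a := ua / s2 with ha
  have hua_eq : ua = s2 * a := by rw [ha, mul_div_cancel₀ _ hs2.ne']
  have ha1 : a < 1 := (div_lt_one hs2).2 hus2
  have h3a : 2 < 3 * a := by nlinarith
  obtain ⟨hae, he1⟩ := etaFun_mem_Icc (div_pos hua0 hs2) ha1.le hq
  set e := etaFun a q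
  obtain ⟨Q, hQ, hQM⟩ := heig q hq
  have htr := trace_eq_of_transpose_mul_mul_eq hQ.1 hQM
  have htr2 := trace_mul_self_eq_of_transpose_mul_mul_eq hQ.1 hQM
  have htra2 := trace_mul_self_eq_of_transpose_mul_mul_eq hR.1 heq
  rw [Mcurve, trace_smul_diagonal_add_smul_outer _ _ _ _ hn, trace_diagonal_three, hE2 q hq]
    at htr
  rw [Mcurve, trace_mul_self_smul_diagonal_add_smul_outer _ _ _ _ hn,
    trace_diagonal_three_mul_self, hE2 q hq] at htr2
  rw [trace_diagonal_three_mul_self, trace_mul_self_smul_diagonal_add_smul_outer _ _ _ _ hn]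
    at htra2
  have hE13 : E1 q + E3 q = 1 - s2 * e := by linear_combination -htr + e * hsum
  have hkey := two_mul_sub_mul_sub_eq_of_traces
    (σ := s1 * n 0 ^ 2 + s2 * n 1 ^ 2 + s3 * n 2 ^ 2) hs2.ne' (div_pos hua0 hs2).ne' hua_eq hsum
    hua (by linear_combination htra2) hE13 (by linear_combination -htr2)
  have hprod : 0 ≤ (E1 q - (3 * ua - 2 * s2 * e)) * (E3 q - (3 * ua - 2 * s2 * e)) := by
    refine nonneg_of_mul_nonneg_right (a := 2 * (1 - a)) ?_ (by linarith)
    rw [hkey]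
    exact mul_nonneg (mul_nonneg (mul_pos (sub_pos.2 hs12) (sub_pos.2 hs23)).le
      (sub_nonneg.2 hae)) (by linarith)
  have hsa : ua ≤ s2 * e := hua_eq ▸ mul_le_mul_of_nonneg_left hae hs2.le
  have hE1 := nonneg_of_mul_nonneg_of_add_nonneg hprod (by linarith)
  rw [hE2 q hq]
  linarith

theorem statement13 (s1 s2 s3 ua : ℝ)
    (hs1 : 0 < s1) (hs12 : s1 < s2) (hs23 : s2 < s3) (hsum : s1 + s2 + s3 = 1)
    (hua : bpoly s1 s2 s3 ua = 0) (huamin : ∀ x : ℝ, bpoly s1 s2 s3 x = 0 → ua ≤ x)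
    (hua1 : s1 ≤ ua) (hua2 : ua < 1 / 3)
    (S : Matrix (Fin 3) (Fin 3) ℝ) (hS : S = Matrix.diagonal ![s1, s2, s3])
    (n : Fin 3 → ℝ) (hn : unitVec n) (hn1 : n 1 = 0)
    (R : Matrix (Fin 3) (Fin 3) ℝ) (hR : IsSO3 R)
    (heq : Rᵀ * Matrix.diagonal ![ua, ua, 1 - 2 * ua] * R =
      (ua / s2) • S + (1 - ua / s2) • outer n)
    (E1 E2 E3 : ℝ → ℝ)
    (hord : ∀ t ∈ Set.Icc (0 : ℝ) 1, E1 t ≤ E2 t ∧ E2 t ≤ E3 t)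
    (heig : ∀ t ∈ Set.Icc (0 : ℝ) 1, ∃ Q : Matrix (Fin 3) (Fin 3) ℝ, IsSO3 Q ∧
      Qᵀ * Mcurve S n (ua / s2) t * Q = Matrix.diagonal ![E1 t, E2 t, E3 t])
    (hE2 : ∀ t ∈ Set.Icc (0 : ℝ) 1, E2 t = s2 * etaFun (ua / s2) t) :
    ∀ q ∈ Set.Icc (0 : ℝ) 1, E1 q + 2 * E2 q - 3 * ua ≥ 0 :=
  statement13_general s1 s2 s3 ua hs1 hs12 hs23 hsum hua huamin hua1 hua2 S hS n hn R hR heq E1 E2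
    E3 heig hE2
end
end

section
/- The functions t ↦ i₂(M_α(t)), t ↦ i₃(M_α(t)), t ↦ i₂(M_β(t)), t ↦ i₃(M_β(t)) are differentiable at t = 0, the derivatives of the i₂-components at 0 are nonzero, and the slopes of the curves γ_α and γ_β at the common point (i₂(S), i₃(S)) satisfy (d/dt i₃(M_α))(0) / (d/dt i₂(M_α))(0) = 3 s₂ (1 − 2u_α)/(2 − 3u_α), (d/dt i₃(M_β))(0) / (d/dt i₂(M_β))(0) = 3 s₂ (1 − 2u_β)/(2 − 3u_β), and 3 s₂ (1 − 2u_α)/(2 − 3u_α) > 3 s₂ (1 − 2u_β)/(2 − 3u_β). (Lemma 4.4, tangent comparison at S.) -/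
open Matrix Set

noncomputable section

/-!
For `S = diag(s₁, s₂, s₃)` and a unit vector `n ⊥ e₂`, both `i₂` and `i₃` of `η S + (1 − η) n⊗n`
are polynomials in `η` in which `n` enters only through `w = s₁ n₃² + s₃ n₁²`. Differentiating
at `η = 1` (i.e. `t = 0`), the tangent of the curve at `(i₂(S), i₃(S))` is proportional to
`(2 i₂(S) − s₂ − w, 3 det S − s₂ w)`. The rotation identity gives `det = u²(1 − 2u)`, which pins
`(s₂ − u) w = s₂²(1 − 2u) − u s₁ s₃`; together with `b(u) = 0` this turns the slope into
`3 s₂ (1 − 2u)/(2 − 3u)`. Since `b(s₂) = s₂(s₂ − s₁)(s₂ − s₃) < 0 < b(2/3)`, the roots satisfy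
`u_α < s₂ < u_β < 2/3`, and `x ↦ (1 − 2x)/(2 − 3x) = 2/3 − 1/(3(2 − 3x))` decreases on `x < 2/3`.
-/

theorem quadratic_eq_mul_sub_mul_sub {K : Type*} [Field K] {a b c p q : K} (hpq : p ≠ q)
    (hp : a * p ^ 2 + b * p + c = 0) (hq : a * q ^ 2 + b * q + c = 0) (x : K) :
    a * x ^ 2 + b * x + c = a * (x - p) * (x - q) := by
  have hsum : a * (p + q) + b = 0 := by
    refine (mul_eq_zero.mp ?_).resolve_left (sub_ne_zero.mpr hpq)
    linear_combination hp - hq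
  linear_combination (x - p) * hsum + hp

theorem bpoly_roots_ne_and_lt_two_thirds {s1 s2 s3 ua ub : ℝ}
    (hs1 : 0 < s1) (hs12 : s1 < s2) (hs23 : s2 < s3) (hsum : s1 + s2 + s3 = 1)
    (hua : bpoly s1 s2 s3 ua = 0) (hub : bpoly s1 s2 s3 ub = 0)
    (hua2 : ua < 1 / 3) (hub1 : 1 / 3 < ub) :
    ua ≠ s2 ∧ ub ≠ s2 ∧ ub < 2 / 3 := by
  have hfac (x : ℝ) : bpoly s1 s2 s3 x = 6 * s2 * (x - ua) * (x - ub) :=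
    quadratic_eq_mul_sub_mul_sub (by linarith) hua hub x
  have hs2 : 0 < s2 := hs1.trans hs12
  have hb_s2 : bpoly s1 s2 s3 s2 < 0 := by
    have : bpoly s1 s2 s3 s2 = s2 * ((s2 - s1) * (s2 - s3)) := by
      unfold bpoly; linear_combination s2 ^ 2 * hsum
    rw [this]
    exact mul_neg_of_pos_of_neg hs2 (mul_neg_of_pos_of_neg (by linarith) (by linarith))
  have hb_two_thirds : 0 < bpoly s1 s2 s3 (2 / 3) := by
    have : bpoly s1 s2 s3 (2 / 3) = 2 / 3 * (s2 * (s1 + s3) + s1 * s3) := by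
      unfold bpoly; linear_combination (-2 / 3 * s2) * hsum
    rw [this]
    have : 0 < s3 := by linarith
    positivity
  rw [hfac] at hb_s2 hb_two_thirds
  refine ⟨?_, ?_, ?_⟩
  · rintro rfl; simp at hb_s2
  · rintro rfl; simp at hb_s2
  · nlinarith [mul_pos (mul_pos (by norm_num : (0 : ℝ) < 6) hs2) (by linarith : (0 : ℝ) < 2 / 3 - ua)]

theorem strictAntiOn_mul_one_sub_two_mul_div {c : ℝ} (hc : 0 < c) :
    StrictAntiOn (fun x : ℝ => c * (1 - 2 * x) / (2 - 3 * x)) (Iio (2 / 3)) := by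
  intro x hx y hy hxy
  simp only [mem_Iio] at hx hy
  rw [div_lt_div_iff₀ (by linarith) (by linarith)]
  nlinarith

theorem IsSO3.det_transpose_mul_mul {R : Matrix (Fin 3) (Fin 3) ℝ} (hR : IsSO3 R)
    (D : Matrix (Fin 3) (Fin 3) ℝ) : (Rᵀ * D * R).det = D.det := by
  rw [det_mul, det_mul, det_transpose, hR.2, one_mul, mul_one]

theorem etaFun_zero {lam : ℝ} (hlam : lam ≠ 0) : etaFun lam 0 = 1 := by
  simp [etaFun, hlam]

theorem hasDerivAt_etaFun_zero {lam : ℝ} (hlam : lam ≠ 0) :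
    HasDerivAt (etaFun lam) (-(1 - lam) / lam) 0 := by
  have hden : HasDerivAt (fun t : ℝ => lam + t * (1 - lam)) (1 - lam) 0 := by
    simpa using ((hasDerivAt_id (0 : ℝ)).mul_const (1 - lam)).const_add lam
  show HasDerivAt (fun t => lam / (lam + t * (1 - lam))) _ 0
  refine ((hasDerivAt_const (0 : ℝ) lam).div hden (by simpa using hlam)).congr_deriv ?_
  simp only [zero_mul, add_zero, zero_sub]
  field_simp

theorem HasDerivAt.comp_etaFun {f : ℝ → ℝ} {f' lam : ℝ} (hf : HasDerivAt f f' 1)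
    (hlam : lam ≠ 0) :
    HasDerivAt (fun t => f (etaFun lam t)) (f' * (-(1 - lam) / lam)) 0 :=
  (etaFun_zero hlam ▸ hf).comp 0 (hasDerivAt_etaFun_zero hlam)

section DiagonalPlusOuter

variable {s1 s2 s3 lam : ℝ} {n : Fin 3 → ℝ}

theorem i2_smul_diagonal_add_smul_outer_s19 (hn : unitVec n) (hn1 : n 1 = 0) (η : ℝ) :
    i2 (η • diagonal ![s1, s2, s3] + (1 - η) • outer n) =
      (s1 * s2 + s1 * s3 + s2 * s3) * η ^ 2 +
        (s2 + (s1 * n 2 ^ 2 + s3 * n 0 ^ 2)) * η * (1 - η) := by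
  rw [unitVec, hn1] at hn
  simp only [i2, Matrix.diagonal, outer, smul_of, trace_add, trace_smul, trace_vecMulVec,
    trace_fin_three, mul_apply, Fin.sum_univ_three, dotProduct, Matrix.add_apply, Matrix.smul_apply,
    vecMulVec_apply, of_apply, cons_val, hn1, smul_eq_mul, Pi.smul_apply, Fin.reduceEq, ↓reduceIte,
    mul_zero, add_zero, zero_mul, zero_add]
  linear_combination η * s2 * (1 - η) * hn

theorem i3_smul_diagonal_add_smul_outer_s19 (hn1 : n 1 = 0) (η : ℝ) :
    i3 (η • diagonal ![s1, s2, s3] + (1 - η) • outer n) =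
      s1 * s2 * s3 * η ^ 3 + s2 * (s1 * n 2 ^ 2 + s3 * n 0 ^ 2) * η ^ 2 * (1 - η) := by
  simp only [i3, Matrix.diagonal, outer, det_fin_three, Matrix.add_apply, Matrix.smul_apply,
    vecMulVec_apply, of_apply, cons_val, hn1, smul_eq_mul, Fin.reduceEq, ↓reduceIte, mul_zero, add_zero,
    zero_mul, sub_zero]
  ring

theorem hasDerivAt_i2_Mcurve (hn : unitVec n) (hn1 : n 1 = 0) (hlam : lam ≠ 0) :
    HasDerivAt (fun t => i2 (Mcurve (diagonal ![s1, s2, s3]) n lam t))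
      ((2 * (s1 * s2 + s1 * s3 + s2 * s3) - (s2 + (s1 * n 2 ^ 2 + s3 * n 0 ^ 2))) *
        (-(1 - lam) / lam)) 0 := by
  simp only [Mcurve, i2_smul_diagonal_add_smul_outer_s19 hn hn1]
  have hp : HasDerivAt (fun η => (s1 * s2 + s1 * s3 + s2 * s3) * η ^ 2 +
      (s2 + (s1 * n 2 ^ 2 + s3 * n 0 ^ 2)) * η * (1 - η))
      (2 * (s1 * s2 + s1 * s3 + s2 * s3) - (s2 + (s1 * n 2 ^ 2 + s3 * n 0 ^ 2))) 1 := by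
    have := (((hasDerivAt_id (1 : ℝ)).pow 2).const_mul (s1 * s2 + s1 * s3 + s2 * s3)).add
      (((hasDerivAt_id (1 : ℝ)).const_mul (s2 + (s1 * n 2 ^ 2 + s3 * n 0 ^ 2))).mul
        ((hasDerivAt_id (1 : ℝ)).const_sub 1))
    refine this.congr_deriv ?_
    simp only [id]
    ring
  exact hp.comp_etaFun hlam

theorem hasDerivAt_i3_Mcurve (hn1 : n 1 = 0) (hlam : lam ≠ 0) :
    HasDerivAt (fun t => i3 (Mcurve (diagonal ![s1, s2, s3]) n lam t))
      ((3 * (s1 * s2 * s3) - s2 * (s1 * n 2 ^ 2 + s3 * n 0 ^ 2)) * (-(1 - lam) / lam)) 0 := by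
  simp only [Mcurve, i3_smul_diagonal_add_smul_outer_s19 hn1]
  have hp : HasDerivAt (fun η => s1 * s2 * s3 * η ^ 3 +
      s2 * (s1 * n 2 ^ 2 + s3 * n 0 ^ 2) * η ^ 2 * (1 - η))
      (3 * (s1 * s2 * s3) - s2 * (s1 * n 2 ^ 2 + s3 * n 0 ^ 2)) 1 := by
    have := (((hasDerivAt_id (1 : ℝ)).pow 3).const_mul (s1 * s2 * s3)).add
      ((((hasDerivAt_id (1 : ℝ)).pow 2).const_mul (s2 * (s1 * n 2 ^ 2 + s3 * n 0 ^ 2))).mul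
        ((hasDerivAt_id (1 : ℝ)).const_sub 1))
    refine this.congr_deriv ?_
    simp only [id, Pi.pow_apply]
    ring
  exact hp.comp_etaFun hlam

end DiagonalPlusOuter

theorem tangent_coeffs_of_bpoly_root {s1 s2 s3 u w : ℝ} (hsum : s1 + s2 + s3 = 1)
    (hu : bpoly s1 s2 s3 u = 0) (hus2 : u ≠ s2)
    (hw : (s2 - u) * w = s2 ^ 2 * (1 - 2 * u) - u * (s1 * s3)) :
    u * (2 * (s1 * s2 + s1 * s3 + s2 * s3) - (s2 + w)) = 2 * s2 * (s2 - u) * (3 * u - 2) ∧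
      u * (3 * (s1 * s2 * s3) - s2 * w) = 6 * s2 ^ 2 * (s2 - u) * (2 * u - 1) := by
  obtain rfl : s3 = 1 - s1 - s2 := by linarith
  unfold bpoly at hu
  have hsu : s2 - u ≠ 0 := sub_ne_zero.mpr hus2.symm
  constructor <;> refine mul_left_cancel₀ hsu ?_
  · linear_combination (-u) * hw + (2 * s2 - u) * hu
  · linear_combination (-s2 * u) * hw + s2 * (3 * s2 - 2 * u) * hu

theorem Mcurve_tangent_slope {s1 s2 s3 u : ℝ} {n : Fin 3 → ℝ} (hs2 : s2 ≠ 0)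
    (hsum : s1 + s2 + s3 = 1) (hu : bpoly s1 s2 s3 u = 0) (hu0 : u ≠ 0) (hus2 : u ≠ s2)
    (hu23 : u ≠ 2 / 3) (hn : unitVec n) (hn1 : n 1 = 0)
    (hdet : ((u / s2) • diagonal ![s1, s2, s3] + (1 - u / s2) • outer n).det =
      u ^ 2 * (1 - 2 * u)) :
    DifferentiableAt ℝ (fun t => i2 (Mcurve (diagonal ![s1, s2, s3]) n (u / s2) t)) 0 ∧
    DifferentiableAt ℝ (fun t => i3 (Mcurve (diagonal ![s1, s2, s3]) n (u / s2) t)) 0 ∧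
    deriv (fun t => i2 (Mcurve (diagonal ![s1, s2, s3]) n (u / s2) t)) 0 ≠ 0 ∧
    deriv (fun t => i3 (Mcurve (diagonal ![s1, s2, s3]) n (u / s2) t)) 0 /
        deriv (fun t => i2 (Mcurve (diagonal ![s1, s2, s3]) n (u / s2) t)) 0 =
      3 * s2 * (1 - 2 * u) / (2 - 3 * u) := by
  have hlam : u / s2 ≠ 0 := div_ne_zero hu0 hs2
  have hspeed : -(1 - u / s2) / (u / s2) ≠ 0 := by
    refine div_ne_zero (neg_ne_zero.mpr (sub_ne_zero.mpr ?_)) hlam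
    rwa [ne_comm, ne_eq, div_eq_one_iff_eq hs2]
  have hw : (s2 - u) * (s1 * n 2 ^ 2 + s3 * n 0 ^ 2) = s2 ^ 2 * (1 - 2 * u) - u * (s1 * s3) := by
    rw [← i3, i3_smul_diagonal_add_smul_outer_s19 hn1] at hdet
    field_simp at hdet
    linear_combination hdet
  obtain ⟨hD2, hD3⟩ := tangent_coeffs_of_bpoly_root hsum hu hus2 hw
  have h2 := hasDerivAt_i2_Mcurve (s1 := s1) (s2 := s2) (s3 := s3) hn hn1 hlam
  have h3 := hasDerivAt_i3_Mcurve (s1 := s1) (s2 := s2) (s3 := s3) hn1 hlam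
  have h32 : 3 * u - 2 ≠ 0 := fun h => hu23 (by linarith)
  have h23 : 2 - 3 * u ≠ 0 := fun h => hu23 (by linarith)
  have hD2ne : 2 * (s1 * s2 + s1 * s3 + s2 * s3) - (s2 + (s1 * n 2 ^ 2 + s3 * n 0 ^ 2)) ≠ 0 := by
    intro h
    rw [h, mul_zero] at hD2
    exact mul_ne_zero (mul_ne_zero (mul_ne_zero two_ne_zero hs2) (sub_ne_zero.mpr hus2.symm)) h32
      hD2.symm
  refine ⟨h2.differentiableAt, h3.differentiableAt, ?_, ?_⟩
  · rw [h2.deriv]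
    exact mul_ne_zero hD2ne hspeed
  · rw [h2.deriv, h3.deriv, mul_div_mul_right _ _ hspeed, div_eq_div_iff hD2ne h23]
    refine mul_left_cancel₀ hu0 ?_
    linear_combination (2 - 3 * u) * hD3 - 3 * s2 * (1 - 2 * u) * hD2

theorem statement19_general (s1 s2 s3 ua ub : ℝ)
    (hs1 : 0 < s1) (hs12 : s1 < s2) (hs23 : s2 < s3) (hsum : s1 + s2 + s3 = 1)
    (hua : bpoly s1 s2 s3 ua = 0) (hub : bpoly s1 s2 s3 ub = 0)
    (hua1 : s1 ≤ ua) (hua2 : ua < 1 / 3) (hub1 : 1 / 3 < ub)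
    (S : Matrix (Fin 3) (Fin 3) ℝ) (hS : S = Matrix.diagonal ![s1, s2, s3])
    (n : Fin 3 → ℝ) (hn : unitVec n) (hn1 : n 1 = 0)
    (m : Fin 3 → ℝ) (hm : unitVec m) (hm1 : m 1 = 0)
    (R : Matrix (Fin 3) (Fin 3) ℝ) (hR : IsSO3 R)
    (heqa : Rᵀ * Matrix.diagonal ![ua, ua, 1 - 2 * ua] * R =
      (ua / s2) • S + (1 - ua / s2) • outer n)
    (Rp : Matrix (Fin 3) (Fin 3) ℝ) (hRp : IsSO3 Rp)
    (heqb : Rpᵀ * Matrix.diagonal ![1 - 2 * ub, ub, ub] * Rp =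
      (ub / s2) • S + (1 - ub / s2) • outer m) :
    DifferentiableAt ℝ (fun t => i2 (Mcurve S n (ua / s2) t)) 0 ∧
    DifferentiableAt ℝ (fun t => i3 (Mcurve S n (ua / s2) t)) 0 ∧
    DifferentiableAt ℝ (fun t => i2 (Mcurve S m (ub / s2) t)) 0 ∧
    DifferentiableAt ℝ (fun t => i3 (Mcurve S m (ub / s2) t)) 0 ∧
    deriv (fun t => i2 (Mcurve S n (ua / s2) t)) 0 ≠ 0 ∧
    deriv (fun t => i2 (Mcurve S m (ub / s2) t)) 0 ≠ 0 ∧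
    deriv (fun t => i3 (Mcurve S n (ua / s2) t)) 0 /
        deriv (fun t => i2 (Mcurve S n (ua / s2) t)) 0 =
      3 * s2 * (1 - 2 * ua) / (2 - 3 * ua) ∧
    deriv (fun t => i3 (Mcurve S m (ub / s2) t)) 0 /
        deriv (fun t => i2 (Mcurve S m (ub / s2) t)) 0 =
      3 * s2 * (1 - 2 * ub) / (2 - 3 * ub) ∧
    3 * s2 * (1 - 2 * ua) / (2 - 3 * ua) > 3 * s2 * (1 - 2 * ub) / (2 - 3 * ub) := by
  subst hS
  have hs2 : 0 < s2 := hs1.trans hs12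
  obtain ⟨hua_s2, hub_s2, hub23⟩ :=
    bpoly_roots_ne_and_lt_two_thirds hs1 hs12 hs23 hsum hua hub hua2 hub1
  have hdeta := hR.det_transpose_mul_mul (diagonal ![ua, ua, 1 - 2 * ua])
  have hdetb := hRp.det_transpose_mul_mul (diagonal ![1 - 2 * ub, ub, ub])
  simp only [heqa, heqb, det_diagonal, Fin.prod_univ_three, cons_val_zero, cons_val_one,
    cons_val_two, head_cons, tail_cons] at hdeta hdetb
  obtain ⟨hα2, hα3, hα2ne, hαslope⟩ := Mcurve_tangent_slope hs2.ne' hsum hua (by linarith)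
    hua_s2 (by linarith) hn hn1 (by rw [hdeta]; ring)
  obtain ⟨hβ2, hβ3, hβ2ne, hβslope⟩ := Mcurve_tangent_slope hs2.ne' hsum hub (by linarith)
    hub_s2 hub23.ne hm hm1 (by rw [hdetb]; ring)
  refine ⟨hα2, hα3, hβ2, hβ3, hα2ne, hβ2ne, hαslope, hβslope, ?_⟩
  exact strictAntiOn_mul_one_sub_two_mul_div (mul_pos three_pos hs2)
    (by simp only [mem_Iio]; linarith) (mem_Iio.mpr hub23) (by linarith)

theorem statement19 (s1 s2 s3 ua ub : ℝ)
    (hs1 : 0 < s1) (hs12 : s1 < s2) (hs23 : s2 < s3) (hsum : s1 + s2 + s3 = 1)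
    (hua : bpoly s1 s2 s3 ua = 0) (huamin : ∀ x : ℝ, bpoly s1 s2 s3 x = 0 → ua ≤ x)
    (hub : bpoly s1 s2 s3 ub = 0) (hubmax : ∀ x : ℝ, bpoly s1 s2 s3 x = 0 → x ≤ ub)
    (hua1 : s1 ≤ ua) (hua2 : ua < 1 / 3) (hub1 : 1 / 3 < ub) (hub2 : ub ≤ s3)
    (S : Matrix (Fin 3) (Fin 3) ℝ) (hS : S = Matrix.diagonal ![s1, s2, s3])
    (n : Fin 3 → ℝ) (hn : unitVec n) (hn1 : n 1 = 0)
    (m : Fin 3 → ℝ) (hm : unitVec m) (hm1 : m 1 = 0)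
    (R : Matrix (Fin 3) (Fin 3) ℝ) (hR : IsSO3 R)
    (heqa : Rᵀ * Matrix.diagonal ![ua, ua, 1 - 2 * ua] * R =
      (ua / s2) • S + (1 - ua / s2) • outer n)
    (Rp : Matrix (Fin 3) (Fin 3) ℝ) (hRp : IsSO3 Rp)
    (heqb : Rpᵀ * Matrix.diagonal ![1 - 2 * ub, ub, ub] * Rp =
      (ub / s2) • S + (1 - ub / s2) • outer m) :
    DifferentiableAt ℝ (fun t => i2 (Mcurve S n (ua / s2) t)) 0 ∧
    DifferentiableAt ℝ (fun t => i3 (Mcurve S n (ua / s2) t)) 0 ∧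
    DifferentiableAt ℝ (fun t => i2 (Mcurve S m (ub / s2) t)) 0 ∧
    DifferentiableAt ℝ (fun t => i3 (Mcurve S m (ub / s2) t)) 0 ∧
    deriv (fun t => i2 (Mcurve S n (ua / s2) t)) 0 ≠ 0 ∧
    deriv (fun t => i2 (Mcurve S m (ub / s2) t)) 0 ≠ 0 ∧
    deriv (fun t => i3 (Mcurve S n (ua / s2) t)) 0 /
        deriv (fun t => i2 (Mcurve S n (ua / s2) t)) 0 =
      3 * s2 * (1 - 2 * ua) / (2 - 3 * ua) ∧
    deriv (fun t => i3 (Mcurve S m (ub / s2) t)) 0 /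
        deriv (fun t => i2 (Mcurve S m (ub / s2) t)) 0 =
      3 * s2 * (1 - 2 * ub) / (2 - 3 * ub) ∧
    3 * s2 * (1 - 2 * ua) / (2 - 3 * ua) > 3 * s2 * (1 - 2 * ub) / (2 - 3 * ub) :=
  statement19_general s1 s2 s3 ua ub hs1 hs12 hs23 hsum hua hub hua1 hua2 hub1 S hS n hn hn1 m hm
    hm1 R hR heqa Rp hRp heqb
end
end
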